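/- arXiv:2512.15500 — 3 statements merged into one kernel-verified Lean document; each statement's English description precedes it below -/
import Mathlib

section
/- Let $\nu$ be a dislocation measure satisfying: there exist $c_\nu \in (0,\infty)$ and $\gamma \in [0,1)$ such that $\nu(s_1 \leq 1 - x) \sim c_\nu x^{-\gamma}$ as $x \downarrow 0$. Then for every integer $k \geq 2$, the function $f_k(x) = \nu(\sum_{i \geq 1} s_i^k \leq 1 - x)$ satisfies $f_k(x) \sim c_\nu (x/k)^{-\gamma}$ as $x \downarrow 0$. -/
open MeasureTheory Filter
open scoped ENNReal Topology

/-!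
Here `s 0` is the paper's largest fragment `s₁`. Since `∑_{i ≥ 2} s_i ^ k ≤ (1 - s₁) ^ k`, the event
`∑ s_i ^ k ≤ 1 - x` lies between `s₁ ^ k + (1 - s₁) ^ k ≤ 1 - x` and `s₁ ^ k ≤ 1 - x`.
The larger one is `s₁ ≤ 1 - y(x)` with `y(x) = 1 - (1 - x) ^ (1 / k) ~ x / k`. The smaller one
contains `u(x) ≤ s₁ ≤ 1 - u(x)` with `u(x) = x / k + x ^ 2 ~ x / k`, whose measure differs from
`ν(s₁ ≤ 1 - u(x))` by `ν(s₁ < u(x)) → ν(s₁ ≤ 0) = 0`. So both bounds are `~ c (x / k) ^ (-γ)`.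
-/

theorem pow_add_pow_add_mul_pow_le_one {w v : ℝ} (hw : 0 ≤ w) (hv : 0 ≤ v) (hwv : w + v = 1)
    {k : ℕ} (hk : 2 ≤ k) : w ^ k + v ^ k + k * w * v ^ (k - 1) ≤ 1 := by
  induction k, hk using Nat.le_induction with
  | base => norm_num; nlinarith
  | succ n hn ih =>
    obtain ⟨m, rfl⟩ : ∃ m, n = m + 1 := ⟨n - 1, by omega⟩
    simp only [Nat.add_sub_cancel] at ih ⊢
    push_cast at ih ⊢
    have hdrop : 0 ≤ w ^ (m + 1) * v + (m + 1) * w ^ 2 * v ^ m := by positivity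
    linear_combination ih + hdrop + (w ^ (m + 1) + v ^ (m + 1) + (m + 1) * w * v ^ m) * hwv

theorem pow_add_one_sub_pow_le_one_sub_of_le_half {k : ℕ} (hk : 2 ≤ k) {x w : ℝ} (hx : 0 ≤ x)
    (hxk : k * (k - 1) * x ≤ 1) (hw : x / k + x ^ 2 ≤ w) (hw' : w ≤ 1 / 2) :
    w ^ k + (1 - w) ^ k ≤ 1 - x := by
  have hk0 : (2 : ℝ) ≤ k := by exact_mod_cast hk
  have hw0 : 0 ≤ w := le_trans (by positivity) hw
  -- For `x ≤ w` the case `k = 2` gives `≤ 1 - w`; for `w < x` the binomial term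
  -- `k w (1 - w) ^ (k - 1) ≥ k w (1 - (k - 1) w)` exceeds `x` thanks to the margin `x ^ 2`.
  rcases le_or_gt x w with hxw | hwx
  · have h1 : w ^ k ≤ w ^ 2 := pow_le_pow_of_le_one hw0 (by linarith) hk
    have h2 : (1 - w) ^ k ≤ (1 - w) ^ 2 := pow_le_pow_of_le_one (by linarith) (by linarith) hk
    nlinarith
  · have hbin := pow_add_pow_add_mul_pow_le_one hw0 (by linarith) (add_sub_cancel w 1) hk
    have hbern : 1 - (k - 1) * w ≤ (1 - w) ^ (k - 1) := by
      have := one_add_mul_le_pow (a := -w) (by linarith) (k - 1)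
      rw [Nat.cast_sub (by omega), ← sub_eq_add_neg, Nat.cast_one] at this
      linarith
    have hxk' : (k - 1) * x ≤ 1 := by nlinarith
    have hmain : x ≤ k * w * (1 - (k - 1) * w) :=
      calc x ≤ x + x ^ 2 * (1 - k * (k - 1) * x) := by
            nlinarith [mul_nonneg (sq_nonneg x) (sub_nonneg.2 hxk)]
        _ = k * (x / k + x ^ 2) * (1 - (k - 1) * x) := by field_simp; ring
        _ ≤ k * w * (1 - (k - 1) * w) := by
            gcongr
            linarith
    have := mul_le_mul_of_nonneg_left hbern (by positivity : (0 : ℝ) ≤ k * w)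
    linarith

theorem pow_add_one_sub_pow_le_one_sub {k : ℕ} (hk : 2 ≤ k) {x w : ℝ} (hx : 0 ≤ x)
    (hxk : k * (k - 1) * x ≤ 1) (hw : x / k + x ^ 2 ≤ w) (hw' : w ≤ 1 - (x / k + x ^ 2)) :
    w ^ k + (1 - w) ^ k ≤ 1 - x := by
  rcases le_total w (1 / 2) with hw2 | hw2
  · exact pow_add_one_sub_pow_le_one_sub_of_le_half hk hx hxk hw hw2
  · simpa [add_comm] using
      pow_add_one_sub_pow_le_one_sub_of_le_half hk hx hxk (w := 1 - w) (by linarith) (by linarith)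

section Sequence

variable {s : ℕ → ℝ}

theorem summable_pow_of_hasSum_one (h0 : ∀ i, 0 ≤ s i) (hs : HasSum s 1) {k : ℕ} (hk : k ≠ 0) :
    Summable fun i => s i ^ k :=
  .of_nonneg_of_le (fun i => pow_nonneg (h0 i) k)
    (fun i => pow_le_of_le_one (h0 i) (le_hasSum hs i fun j _ => h0 j) hk) hs.summable

theorem pow_le_tsum_pow_of_hasSum_one (h0 : ∀ i, 0 ≤ s i) (hs : HasSum s 1) {k : ℕ} (hk : k ≠ 0)
    (i : ℕ) : s i ^ k ≤ ∑' j, s j ^ k :=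
  (summable_pow_of_hasSum_one h0 hs hk).le_tsum i fun j _ => pow_nonneg (h0 j) k

theorem tsum_pow_le_pow_add_one_sub_pow (h0 : ∀ i, 0 ≤ s i) (hs : HasSum s 1) {k : ℕ}
    (hk : k ≠ 0) : ∑' i, s i ^ k ≤ s 0 ^ k + (1 - s 0) ^ k := by
  obtain ⟨m, rfl⟩ : ∃ m, k = m + 1 := ⟨k - 1, by omega⟩
  have htail : HasSum (fun i => s (i + 1)) (1 - s 0) := by
    simpa using (hasSum_nat_add_iff' 1).2 hs
  have hpow := summable_pow_of_hasSum_one h0 hs hk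
  have hterm (i : ℕ) : s (i + 1) ^ (m + 1) ≤ (1 - s 0) ^ m * s (i + 1) := by
    rw [pow_succ]
    exact mul_le_mul_of_nonneg_right
      (pow_le_pow_left₀ (h0 _) (le_hasSum htail i fun j _ => h0 _) m) (h0 _)
  calc ∑' i, s i ^ (m + 1) = s 0 ^ (m + 1) + ∑' i, s (i + 1) ^ (m + 1) := hpow.tsum_eq_zero_add
    _ ≤ s 0 ^ (m + 1) + ∑' i, (1 - s 0) ^ m * s (i + 1) :=
        (add_le_add_iff_left _).2 <| Summable.tsum_le_tsum hterm
          ((summable_nat_add_iff 1).2 hpow) (htail.summable.mul_left _)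
    _ = s 0 ^ (m + 1) + (1 - s 0) ^ (m + 1) := by rw [tsum_mul_left, htail.tsum_eq, ← pow_succ]

theorem pos_of_antitone_of_hasSum_one (h0 : ∀ i, 0 ≤ s i) (hs : HasSum s 1) (hanti : Antitone s) :
    0 < s 0 := by
  by_contra! h
  obtain rfl : s = 0 := funext fun i => le_antisymm ((hanti (Nat.zero_le i)).trans h) (h0 i)
  exact one_ne_zero (hs.unique hasSum_zero)

theorem hasSum_of_tsum_eq_one (hs : ∑' i, s i = 1) : HasSum s 1 := by
  by_cases h : Summable s
  · exact hs ▸ h.hasSum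
  · simp [tsum_eq_zero_of_not_summable h] at hs

end Sequence

theorem tendsto_one_sub_one_sub_rpow_inv_div {K : ℝ} (hK : K ≠ 0) :
    Tendsto (fun x : ℝ => (1 - (1 - x) ^ K⁻¹) / (x / K)) (𝓝[≠] 0) (𝓝 1) := by
  have hderiv : HasDerivAt (fun x : ℝ => (1 - x) ^ K⁻¹) (-K⁻¹) 0 := by
    simpa using ((hasDerivAt_id (0 : ℝ)).const_sub 1).rpow_const (p := K⁻¹) (by norm_num)
  have hslope := (hasDerivAt_iff_tendsto_slope.mp hderiv).const_mul (-K)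
  rw [neg_mul_neg, mul_inv_cancel₀ hK] at hslope
  refine hslope.congr' (eventually_nhdsWithin_of_forall fun x (hx : x ≠ 0) => ?_)
  simp only [slope_def_field, sub_zero, Real.one_rpow]
  field_simp
  ring

theorem tendsto_div_add_sq_nhdsGT {K : ℝ} (hK : 0 < K) :
    Tendsto (fun x : ℝ => x / K + x ^ 2) (𝓝[>] 0) (𝓝[>] 0) :=
  tendsto_nhdsWithin_of_tendsto_nhds_of_eventually_within _
    ((Continuous.tendsto' (by fun_prop) 0 0 (by simp)).mono_left nhdsWithin_le_nhds)
    (eventually_nhdsWithin_of_forall fun x (hx : 0 < x) => Set.mem_Ioi.2 (by positivity))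

theorem tendsto_one_sub_one_sub_rpow_inv_nhdsGT {K : ℝ} (hK : 0 < K) :
    Tendsto (fun x : ℝ => 1 - (1 - x) ^ K⁻¹) (𝓝[>] 0) (𝓝[>] 0) := by
  refine tendsto_nhdsWithin_of_tendsto_nhds_of_eventually_within _
    ((Continuous.tendsto' ?_ 0 0 (by simp)).mono_left nhdsWithin_le_nhds) ?_
  · exact continuous_const.sub
      ((continuous_const.sub continuous_id).rpow_const fun _ => Or.inr (by positivity))
  · filter_upwards [Ioo_mem_nhdsGT one_pos] with x hx
    exact sub_pos.2 (Real.rpow_lt_one (by linarith [hx.2]) (by linarith [hx.1]) (by positivity))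

theorem tendsto_div_mul_rpow_comp {α : Type*} {l : Filter α} {F : ℝ → ℝ} {v w : α → ℝ}
    {c γ : ℝ} (hF : Tendsto (fun y => F y / (c * y ^ (-γ))) (𝓝[>] 0) (𝓝 1))
    (hv : Tendsto v l (𝓝[>] 0)) (hw : ∀ᶠ x in l, 0 < w x)
    (hvw : Tendsto (fun x => v x / w x) l (𝓝 1)) :
    Tendsto (fun x => F (v x) / (c * w x ^ (-γ))) l (𝓝 1) := by
  have hpow : Tendsto (fun x => (v x / w x) ^ (-γ)) l (𝓝 1) := by
    simpa using hvw.rpow_const (p := -γ) (Or.inl one_ne_zero)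
  have hprod := (hF.comp hv).mul hpow
  rw [mul_one] at hprod
  refine hprod.congr' ?_
  filter_upwards [hv.eventually self_mem_nhdsWithin, hw] with x (hvx : 0 < v x) hwx
  rw [Function.comp_apply, Real.div_rpow hvx.le hwx.le]
  have hvγ := Real.rpow_pos_of_pos hvx (-γ)
  have hwγ := Real.rpow_pos_of_pos hwx (-γ)
  field_simp

theorem tendsto_measure_setOf_lt_nhdsGT {α : Type*} [MeasurableSpace α] {μ : Measure α}
    {f : α → ℝ} (hf : AEMeasurable f μ) {a : ℝ} (hfin : ∃ r > a, μ {x | f x < r} ≠ ∞) :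
    Tendsto (fun r => μ {x | f x < r}) (𝓝[>] a) (𝓝 (μ {x | f x ≤ a})) := by
  have hinter : ⋂ r > a, {x | f x < r} = {x | f x ≤ a} := by
    ext x
    simp only [Set.mem_iInter]
    exact ⟨fun h => le_of_forall_gt h, fun h r hr => h.trans_lt hr⟩
  have := tendsto_measure_biInter_gt (μ := μ) (s := fun r => {x | f x < r})
    (fun r _ => nullMeasurableSet_lt hf aemeasurable_const)
    (fun _ _ _ hij _ hx => lt_of_lt_of_le hx hij) hfin
  rwa [hinter] at this

section Dislocation

variable {ν : Measure (ℕ → ℝ)} {c γ : ℝ}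

theorem measure_head_nonpos_eq_zero (h_mono : ∀ᵐ s ∂ν, Antitone s)
    (hν : ∀ᵐ s ∂ν, (∀ i, 0 ≤ s i) ∧ HasSum s 1) : ν {s | s 0 ≤ 0} = 0 := by
  have hpos : ∀ᵐ s ∂ν, 0 < s 0 := by
    filter_upwards [h_mono, hν] with s hanti ⟨h0, hs⟩
    exact pos_of_antitone_of_hasSum_one h0 hs hanti
  simpa only [not_lt] using ae_iff.1 hpos

/-- An infinite measure has `toReal = 0`, so the ratio in `hH` could not tend to `1`. -/
theorem measure_head_le_ne_top
    (hH : Tendsto (fun x : ℝ => (ν {s | s 0 ≤ 1 - x}).toReal / (c * x ^ (-γ))) (𝓝[>] 0) (𝓝 1))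
    {r : ℝ} (hr : r < 1) : ν {s | s 0 ≤ r} ≠ ∞ := by
  obtain ⟨z, hz, hzr⟩ :=
    ((hH.eventually_ne one_ne_zero).and (Ioo_mem_nhdsGT (sub_pos.2 hr))).exists
  have hfin : ν {s | s 0 ≤ 1 - z} ≠ ∞ := fun h => hz (by simp [h])
  exact ne_top_of_le_ne_top hfin
    (measure_mono (Set.ofPred_subset_ofPred.2 fun s hs => by linarith [hzr.2]))

theorem measure_tsum_pow_le_le_measure_head_le (hν : ∀ᵐ s ∂ν, (∀ i, 0 ≤ s i) ∧ HasSum s 1)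
    {k : ℕ} (hk : k ≠ 0) (x : ℝ) :
    ν {s | ∑' i, s i ^ k ≤ 1 - x} ≤ ν {s | s 0 ≤ (1 - x) ^ (k : ℝ)⁻¹} := by
  refine measure_mono_ae ?_
  filter_upwards [hν] with s ⟨h0, hs⟩ (hsk : ∑' i, s i ^ k ≤ 1 - x)
  change s 0 ≤ (1 - x) ^ (k : ℝ)⁻¹
  rw [← Real.pow_rpow_inv_natCast (h0 0) hk]
  exact Real.rpow_le_rpow (pow_nonneg (h0 0) k)
    ((pow_le_tsum_pow_of_hasSum_one h0 hs hk 0).trans hsk) (by positivity)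

theorem measure_head_le_le_measure_tsum_pow_le_add
    (hν : ∀ᵐ s ∂ν, (∀ i, 0 ≤ s i) ∧ HasSum s 1) {k : ℕ} (hk : 2 ≤ k) {x : ℝ} (hx : 0 ≤ x)
    (hxk : k * (k - 1) * x ≤ 1) :
    ν {s | s 0 ≤ 1 - (x / k + x ^ 2)} ≤
      ν {s | ∑' i, s i ^ k ≤ 1 - x} + ν {s | s 0 < x / k + x ^ 2} := by
  refine (measure_mono_ae ?_).trans (measure_union_le _ _)
  filter_upwards [hν] with s ⟨h0, hs⟩ (hs1 : s 0 ≤ 1 - (x / k + x ^ 2))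
  rcases lt_or_ge (s 0) (x / k + x ^ 2) with hlt | hle
  · exact Or.inr hlt
  · exact Or.inl ((tsum_pow_le_pow_add_one_sub_pow h0 hs (by omega)).trans
      (pow_add_one_sub_pow_le_one_sub hk hx hxk hle hs1))

theorem measure_tsum_pow_le_ne_top
    (hfin : ∀ r < 1, ν {s | s 0 ≤ r} ≠ ∞) (hν : ∀ᵐ s ∂ν, (∀ i, 0 ≤ s i) ∧ HasSum s 1)
    {k : ℕ} (hk : k ≠ 0) {x : ℝ} (hx0 : 0 < x)
    (hx1 : x ≤ 1) : ν {s | ∑' i, s i ^ k ≤ 1 - x} ≠ ∞ :=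
  ne_top_of_le_ne_top
    (hfin _ (Real.rpow_lt_one (by linarith) (by linarith) (by positivity)))
    (measure_tsum_pow_le_le_measure_head_le hν hk x)

theorem toReal_measure_tsum_pow_le_le
    (hfin : ∀ r < 1, ν {s | s 0 ≤ r} ≠ ∞) (hν : ∀ᵐ s ∂ν, (∀ i, 0 ≤ s i) ∧ HasSum s 1)
    {k : ℕ} (hk : k ≠ 0) {x : ℝ} (hx0 : 0 < x)
    (hx1 : x ≤ 1) :
    (ν {s | ∑' i, s i ^ k ≤ 1 - x}).toReal ≤ (ν {s | s 0 ≤ (1 - x) ^ (k : ℝ)⁻¹}).toReal :=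
  ENNReal.toReal_mono
    (hfin _ (Real.rpow_lt_one (by linarith) (by linarith) (by positivity)))
    (measure_tsum_pow_le_le_measure_head_le hν hk x)

theorem toReal_measure_head_le_sub_le
    (hfin : ∀ r < 1, ν {s | s 0 ≤ r} ≠ ∞) (hν : ∀ᵐ s ∂ν, (∀ i, 0 ≤ s i) ∧ HasSum s 1)
    {k : ℕ} (hk : 2 ≤ k) {x : ℝ} (hx : 0 < x)
    (hxk : k * (k - 1) * x ≤ 1) :
    (ν {s | s 0 ≤ 1 - (x / k + x ^ 2)}).toReal - (ν {s | s 0 < x / k + x ^ 2}).toReal ≤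
      (ν {s | ∑' i, s i ^ k ≤ 1 - x}).toReal := by
  have hk' : (2 : ℝ) ≤ k := by exact_mod_cast hk
  have hx1 : 2 * x ≤ 1 :=
    (mul_le_mul_of_nonneg_right (by nlinarith) hx.le).trans hxk
  have hu : x / k + x ^ 2 < 1 := by
    have : x / k ≤ x / 2 := div_le_div_of_nonneg_left hx.le two_pos hk'
    nlinarith
  have hlt_ne_top : ν {s | s 0 < x / k + x ^ 2} ≠ ∞ :=
    ne_top_of_le_ne_top (hfin _ hu) (measure_mono (Set.ofPred_subset_ofPred.2 fun _ => le_of_lt))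
  linarith [ENNReal.toReal_le_add (measure_head_le_le_measure_tsum_pow_le_add hν hk hx.le hxk)
    (measure_tsum_pow_le_ne_top hfin hν (by omega) hx (by linarith)) hlt_ne_top]

theorem tendsto_toReal_measure_head_le_rpow_inv_div
    (hH : Tendsto (fun x : ℝ => (ν {s | s 0 ≤ 1 - x}).toReal / (c * x ^ (-γ))) (𝓝[>] 0) (𝓝 1))
    {k : ℕ} (hk : k ≠ 0) :
    Tendsto (fun x : ℝ => (ν {s | s 0 ≤ (1 - x) ^ (k : ℝ)⁻¹}).toReal / (c * (x / k) ^ (-γ)))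
      (𝓝[>] 0) (𝓝 1) := by
  have hK : (0 : ℝ) < k := by positivity
  simpa only [sub_sub_cancel] using tendsto_div_mul_rpow_comp hH
    (tendsto_one_sub_one_sub_rpow_inv_nhdsGT hK)
    (eventually_nhdsWithin_of_forall fun x (hx : 0 < x) => by positivity)
    ((tendsto_one_sub_one_sub_rpow_inv_div hK.ne').mono_left
      (nhdsWithin_mono _ fun x (hx : 0 < x) => hx.ne'))

theorem tendsto_toReal_measure_head_lt_div
    (hfin : ∀ r < 1, ν {s | s 0 ≤ r} ≠ ∞) (hzero : ν {s | s 0 ≤ 0} = 0)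
    (hc : 0 < c) (hγ : 0 ≤ γ) {k : ℕ} (hk : k ≠ 0) :
    Tendsto (fun x : ℝ => (ν {s | s 0 < x / k + x ^ 2}).toReal / (c * (x / k) ^ (-γ)))
      (𝓝[>] 0) (𝓝 0) := by
  have hK : (0 : ℝ) < k := by positivity
  have hlt : Tendsto (fun r : ℝ => ν {s | s 0 < r}) (𝓝[>] 0) (𝓝 0) := by
    refine hzero ▸ tendsto_measure_setOf_lt_nhdsGT (measurable_pi_apply 0).aemeasurable
      ⟨1 / 2, by norm_num, ?_⟩
    exact ne_top_of_le_ne_top (hfin _ (by norm_num : (1 / 2 : ℝ) < 1))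
      (measure_mono (Set.ofPred_subset_ofPred.2 fun _ => le_of_lt))
  have hnum : Tendsto (fun x : ℝ => (ν {s | s 0 < x / k + x ^ 2}).toReal / c) (𝓝[>] 0) (𝓝 0) := by
    simpa using ((ENNReal.tendsto_toReal ENNReal.zero_ne_top).comp
      (hlt.comp (tendsto_div_add_sq_nhdsGT hK))).div_const c
  refine tendsto_of_tendsto_of_tendsto_of_le_of_le' tendsto_const_nhds hnum ?_ ?_
  · filter_upwards [self_mem_nhdsWithin] with x (hx : 0 < x)
    positivity
  filter_upwards [Ioo_mem_nhdsGT hK] with x hx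
  have hxk : 0 < x / k := div_pos hx.1 hK
  gcongr
  exact le_mul_of_one_le_right hc.le (Real.one_le_rpow_of_pos_of_le_one_of_nonpos hxk
    ((div_le_one hK).2 hx.2.le) (by linarith))

theorem tendsto_toReal_measure_head_le_sub_div
    (hH : Tendsto (fun x : ℝ => (ν {s | s 0 ≤ 1 - x}).toReal / (c * x ^ (-γ))) (𝓝[>] 0) (𝓝 1))
    (hfin : ∀ r < 1, ν {s | s 0 ≤ r} ≠ ∞) (hzero : ν {s | s 0 ≤ 0} = 0) (hc : 0 < c) (hγ : 0 ≤ γ)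
    {k : ℕ} (hk : k ≠ 0) :
    Tendsto (fun x : ℝ => ((ν {s | s 0 ≤ 1 - (x / k + x ^ 2)}).toReal -
        (ν {s | s 0 < x / k + x ^ 2}).toReal) / (c * (x / k) ^ (-γ))) (𝓝[>] 0) (𝓝 1) := by
  have hK : (0 : ℝ) < k := by positivity
  have hratio : Tendsto (fun x : ℝ => (x / k + x ^ 2) / (x / k)) (𝓝[>] 0) (𝓝 1) := by
    refine ((Continuous.tendsto' (by fun_prop : Continuous fun x : ℝ => 1 + k * x) 0 1
      (by simp)).mono_left nhdsWithin_le_nhds).congr' ?_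
    filter_upwards [self_mem_nhdsWithin] with x (hx : 0 < x)
    field_simp
  have hmain := tendsto_div_mul_rpow_comp hH (tendsto_div_add_sq_nhdsGT hK)
    (eventually_nhdsWithin_of_forall fun x (hx : 0 < x) => by positivity) hratio
  simpa only [sub_div, sub_zero] using
    hmain.sub (tendsto_toReal_measure_head_lt_div hfin hzero hc hγ hk)

end Dislocation

theorem stmt_1_general (ν : Measure (ℕ → ℝ)) (c γ : ℝ) (hc : 0 < c) (hγ0 : 0 ≤ γ)
    (h_mono : ∀ᵐ s ∂ν, Antitone s)
    (h_nonneg : ∀ᵐ s ∂ν, ∀ i, 0 ≤ s i)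
    (h_mass : ∀ᵐ s ∂ν, ∑' i, s i = 1)
    (hH : Tendsto (fun x : ℝ => (ν {s | s 0 ≤ 1 - x}).toReal / (c * x ^ (-γ)))
      (𝓝[>] 0) (𝓝 1)) :
    ∀ k : ℕ, 2 ≤ k →
      Tendsto (fun x : ℝ =>
          (ν {s | ∑' i, (s i) ^ k ≤ 1 - x}).toReal / (c * (x / k) ^ (-γ)))
        (𝓝[>] 0) (𝓝 1) := by
  intro k hk
  have hν : ∀ᵐ s ∂ν, (∀ i, 0 ≤ s i) ∧ HasSum s 1 := by
    filter_upwards [h_nonneg, h_mass] with s h0 hs using ⟨h0, hasSum_of_tsum_eq_one hs⟩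
  have hk0 : k ≠ 0 := by omega
  have hfin : ∀ r < 1, ν {s | s 0 ≤ r} ≠ ∞ := fun r hr => measure_head_le_ne_top hH hr
  have hsmall : ∀ᶠ x in 𝓝[>] (0 : ℝ), x ∈ Set.Ioo 0 1 ∧ (k : ℝ) * (k - 1) * x ≤ 1 :=
    Eventually.and (Ioo_mem_nhdsGT one_pos) <| nhdsWithin_le_nhds <|
      (Continuous.tendsto' (by fun_prop : Continuous fun x : ℝ => (k : ℝ) * (k - 1) * x) 0 0
        (by simp)).eventually (eventually_le_nhds one_pos)
  refine tendsto_of_tendsto_of_tendsto_of_le_of_le'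
    (tendsto_toReal_measure_head_le_sub_div hH hfin (measure_head_nonpos_eq_zero h_mono hν) hc
      hγ0 hk0)
    (tendsto_toReal_measure_head_le_rpow_inv_div hH hk0) ?_ ?_
  · filter_upwards [hsmall] with x ⟨⟨hx0, _⟩, hxk⟩
    gcongr ?_ / _
    exact toReal_measure_head_le_sub_le hfin hν hk hx0 hxk
  · filter_upwards [hsmall] with x ⟨⟨hx0, hx1⟩, _⟩
    gcongr ?_ / _
    exact toReal_measure_tsum_pow_le_le hfin hν hk0 hx0 hx1.le

/-- If a dislocation measure `ν` satisfies `ν(s₁ ≤ 1 - x) ~ c x^{-γ}` as `x ↓ 0`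
(assumption (H_γ)), then for every integer `k ≥ 2` the function
`f_k(x) = ν(∑_i s_i^k ≤ 1 - x)` satisfies `f_k(x) ~ c (x/k)^{-γ}` as `x ↓ 0`. -/
theorem stmt_1 (ν : Measure (ℕ → ℝ)) (c γ : ℝ) (hc : 0 < c) (hγ0 : 0 ≤ γ) (hγ1 : γ < 1)
    (h_mono : ∀ᵐ s ∂ν, Antitone s)
    (h_nonneg : ∀ᵐ s ∂ν, ∀ i, 0 ≤ s i)
    (h_mass : ∀ᵐ s ∂ν, ∑' i, s i = 1)
    (h_triv : ν {s | s = fun i => if i = 0 then (1 : ℝ) else 0} = 0)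
    (h_int : ∫⁻ s, ENNReal.ofReal (1 - s 0) ∂ν < ⊤)
    (hH : Tendsto (fun x : ℝ => (ν {s | s 0 ≤ 1 - x}).toReal / (c * x ^ (-γ)))
      (𝓝[>] 0) (𝓝 1)) :
    ∀ k : ℕ, 2 ≤ k →
      Tendsto (fun x : ℝ =>
          (ν {s | ∑' i, (s i) ^ k ≤ 1 - x}).toReal / (c * (x / k) ^ (-γ)))
        (𝓝[>] 0) (𝓝 1) :=
  stmt_1_general ν c γ hc hγ0 h_mono h_nonneg h_mass hH
end

section
/- Let $\nu$ be a dislocation measure and $\eta \in (0,1)$. If $\int_{\mathcal S} \sum_{i \geq 2} s_i^{1-\eta}\, \nu(\mathrm d\mathbf s) < \infty$, then $\int_0^\infty (e^{\eta x} - 1)\, \Xi(\mathrm dx) < \infty$, where $\Xi(\mathrm dx) = \sum_{i \geq 1} e^{-x}\, \nu(-\log(s_i) \in \mathrm dx)$ is the Lévy measure of the tagged-fragment subordinator. Consequently, $\phi$ admits an analytic continuation on $(-\eta', \infty)$ for some $\eta' > 0$, and conversely. -/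
/-!
Pushing `Ξ` back to `ν` gives `∫ (e^{ηx} - 1) dΞ = ∫ ∑ᵢ (sᵢ^{1-η} - sᵢ) dν` and
`φ(q) = ∫ (1 - e^{-qx}) Ξ(dx)` over `(0, ∞)`. Since `∑ᵢ sᵢ = 1`, the first integral and
`∫ ∑_{i ≥ 2} sᵢ^{1-η} dν` differ by at most `∫ (1 - s₁) dν < ∞`.

If `∫ (e^{ηx} - 1) dΞ < ∞`, expanding `e^{-(a+y)x}` in powers of `y` under the integral
(dominated by `(e^{ηx/2} - 1) e^{-ax}`) shows that `φ` is analytic on `(-η/2, ∞)`.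
Conversely, if `φ` extends analytically to a neighbourhood of `0`, so does
`K(q) = φ(q) - φ(q + h) + φ(h)`, the Laplace exponent of the finite measure
`(1 - e^{-hx}) Ξ(dx)`. At a small `a > 0` the Taylor coefficients of `K` are, up to sign,
the moments `∫ xⁿ e^{-ax}/n!`; as they are positive, convergence of the Taylor series
at radius `2a` says exactly that `∫ e^{ax} (1 - e^{-hx}) Ξ(dx) < ∞` (Landau's theorem).
-/

open MeasureTheory Set Real
open scoped ENNReal Topology

section Laplace

open scoped Nat

noncomputable def laplaceExponent (μ : Measure ℝ) (q : ℝ) : ℝ :=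
  ∫ x, (1 - exp (-(q * x))) ∂μ

/-- The Taylor coefficients of `laplaceExponent μ` at `a`. -/
noncomputable def laplaceCoeff (μ : Measure ℝ) (a : ℝ) : ℕ → ℝ
  | 0 => laplaceExponent μ a
  | n + 1 => (-1) ^ n / (n + 1)! * ∫ x, x ^ (n + 1) * exp (-(a * x)) ∂μ

lemma hasSum_pow_succ_div_factorial (t : ℝ) :
    HasSum (fun n : ℕ => t ^ (n + 1) / (n + 1)!) (exp t - 1) := by
  have h := NormedSpace.expSeries_div_hasSum_exp t
  rw [← Real.exp_eq_exp_ℝ] at h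
  simpa using (hasSum_nat_add_iff' 1).mpr h

lemma pow_succ_div_factorial_le_exp_sub_one {t : ℝ} (ht : 0 ≤ t) (n : ℕ) :
    t ^ (n + 1) / (n + 1)! ≤ exp t - 1 :=
  le_hasSum (hasSum_pow_succ_div_factorial t) n fun _ _ => by positivity

variable {μ : Measure ℝ} {a ρ : ℝ}

lemma integrable_pow_succ_mul_exp_neg (hx : ∀ᵐ x ∂μ, 0 ≤ x) (hρ : 0 < ρ)
    (hdom : Integrable (fun x => (exp (ρ * x) - 1) * exp (-(a * x))) μ) (n : ℕ) :
    Integrable (fun x => x ^ (n + 1) * exp (-(a * x))) μ := by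
  refine (hdom.const_mul ((n + 1)! / ρ ^ (n + 1))).mono' (by fun_prop) ?_
  filter_upwards [hx] with x hx
  have h := pow_succ_div_factorial_le_exp_sub_one (mul_nonneg hρ.le hx) n
  rw [mul_pow, div_le_iff₀ (by positivity)] at h
  rw [Real.norm_of_nonneg (by positivity), div_mul_eq_mul_div,
    le_div_iff₀ (by positivity)]
  calc x ^ (n + 1) * exp (-(a * x)) * ρ ^ (n + 1)
      = ρ ^ (n + 1) * x ^ (n + 1) * exp (-(a * x)) := by ring
    _ ≤ (exp (ρ * x) - 1) * (n + 1)! * exp (-(a * x)) := by gcongr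
    _ = _ := by ring

lemma hasSum_exp_neg_sub_exp_neg (a y x : ℝ) :
    HasSum (fun n : ℕ => (-1) ^ n * y ^ (n + 1) / (n + 1)! * (x ^ (n + 1) * exp (-(a * x))))
      (exp (-(a * x)) - exp (-((a + y) * x))) := by
  have h := (hasSum_pow_succ_div_factorial (-(y * x))).mul_left (-exp (-(a * x)))
  rw [show -((a + y) * x) = -(a * x) + -(y * x) by ring, exp_add,
    show ∀ u v : ℝ, u - u * v = -u * (v - 1) by intros; ring]
  exact h.congr_fun fun n => by rw [neg_pow]; ring

lemma hasSum_exp_sub_one_mul_exp_neg (ρ a x : ℝ) :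
    HasSum (fun n : ℕ => ρ ^ (n + 1) / (n + 1)! * (x ^ (n + 1) * exp (-(a * x))))
      ((exp (ρ * x) - 1) * exp (-(a * x))) :=
  ((hasSum_pow_succ_div_factorial (ρ * x)).mul_right (exp (-(a * x)))).congr_fun fun n => by
    rw [mul_pow]
    ring

lemma hasSum_laplaceCoeff_mul_pow (hx : ∀ᵐ x ∂μ, 0 ≤ x)
    (hdom : Integrable (fun x => (exp (ρ * x) - 1) * exp (-(a * x))) μ)
    (hbase : Integrable (fun x => 1 - exp (-(a * x))) μ) {y : ℝ} (hy : |y| ≤ ρ) :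
    HasSum (fun n => laplaceCoeff μ a n * y ^ n) (laplaceExponent μ (a + y)) := by
  set B : ℕ → ℝ → ℝ := fun n x => ρ ^ (n + 1) / (n + 1)! * (x ^ (n + 1) * exp (-(a * x)))
  have hB : ∀ x, HasSum (B · x) ((exp (ρ * x) - 1) * exp (-(a * x))) :=
    hasSum_exp_sub_one_mul_exp_neg ρ a
  have hFB : ∀ᵐ x ∂μ, ∀ n : ℕ,
      ‖(-1) ^ n * y ^ (n + 1) / (n + 1)! * (x ^ (n + 1) * exp (-(a * x)))‖ ≤ B n x := by
    filter_upwards [hx] with x hx n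
    rw [norm_mul, norm_div, norm_mul, norm_pow, norm_pow, norm_neg, norm_one, one_pow, one_mul,
      Real.norm_natCast, Real.norm_eq_abs, Real.norm_of_nonneg (by positivity)]
    simp only [B]
    gcongr
  have hf : Integrable (fun x => exp (-(a * x)) - exp (-((a + y) * x))) μ :=
    hdom.mono' (by fun_prop) (hFB.mono fun x hx =>
      (hasSum_exp_neg_sub_exp_neg a y x).norm_le_of_bounded (hB x) hx)
  have hsum := hasSum_integral_of_dominated_convergence B (fun n => by fun_prop)
    (fun n => hFB.mono fun x hx => hx n) (ae_of_all _ fun x => (hB x).summable)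
    (hdom.congr (ae_of_all _ fun x => (hB x).tsum_eq.symm)) (ae_of_all _ (hasSum_exp_neg_sub_exp_neg a y))
  have hL : laplaceExponent μ (a + y)
      = laplaceExponent μ a + ∫ x, (exp (-(a * x)) - exp (-((a + y) * x))) ∂μ := by
    rw [laplaceExponent, laplaceExponent, ← integral_add hbase hf]
    congr 1 with x
    ring
  refine (hasSum_nat_add_iff' 1).mp ?_
  convert hsum using 1
  · funext n
    rw [integral_const_mul, laplaceCoeff]
    ring
  · simp [laplaceCoeff, hL]

theorem hasFPowerSeriesOnBall_laplaceExponent (hx : ∀ᵐ x ∂μ, 0 ≤ x) (hρ : 0 < ρ)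
    (hdom : Integrable (fun x => (exp (ρ * x) - 1) * exp (-(a * x))) μ)
    (hbase : Integrable (fun x => 1 - exp (-(a * x))) μ) :
    HasFPowerSeriesOnBall (laplaceExponent μ) (.ofScalars ℝ (laplaceCoeff μ a)) a
      (ENNReal.ofReal ρ) where
  r_le := by
    have h := (hasSum_laplaceCoeff_mul_pow hx hdom hbase
      (by rw [abs_neg, abs_of_pos hρ] : |-ρ| ≤ ρ)).summable.abs
    refine FormalMultilinearSeries.le_radius_of_summable_norm _ (r := ρ.toNNReal) ?_
    simp only [FormalMultilinearSeries.ofScalars_norm, Real.coe_toNNReal _ hρ.le]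
    refine h.congr fun n => ?_
    rw [abs_mul, abs_pow, abs_neg, abs_of_pos hρ, Real.norm_eq_abs]
  r_pos := ENNReal.ofReal_pos.mpr hρ
  hasSum {y} hy := by
    rw [Metric.eball_ofReal, Metric.mem_ball, dist_zero_right, Real.norm_eq_abs] at hy
    simpa only [FormalMultilinearSeries.ofScalars_apply_eq, smul_eq_mul] using
      hasSum_laplaceCoeff_mul_pow hx hdom hbase hy.le

lemma abs_one_sub_exp_neg_mul_le {η b x : ℝ} (hη : 0 < η) (hb : -η ≤ b) (hx : 0 ≤ x) :
    |1 - exp (-(b * x))| ≤ (|b| / η + 1) * (exp (η * x) - 1) := by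
  have hE : η * x ≤ exp (η * x) - 1 := by linarith [add_one_le_exp (η * x)]
  have hE0 : 0 ≤ exp (η * x) - 1 := (by positivity : 0 ≤ η * x).trans hE
  have hbE : 0 ≤ |b| / η * (exp (η * x) - 1) := by positivity
  rcases le_total 0 b with hb0 | hb0
  · calc |1 - exp (-(b * x))| = 1 - exp (-(b * x)) :=
          abs_of_nonneg (sub_nonneg.2 (exp_le_one_iff.2 (by nlinarith)))
      _ ≤ |b| / η * (η * x) := by
          rw [abs_of_nonneg hb0, show b / η * (η * x) = b * x by field_simp]
          linarith [add_one_le_exp (-(b * x))]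
      _ ≤ (|b| / η + 1) * (exp (η * x) - 1) := by
          rw [add_mul, one_mul]
          nlinarith [div_nonneg (abs_nonneg b) hη.le]
  · have h : exp (-(b * x)) ≤ exp (η * x) := exp_le_exp.2 (by nlinarith)
    rw [abs_of_nonpos (sub_nonpos.2 (one_le_exp (by nlinarith)))]
    nlinarith

lemma integrable_one_sub_exp_neg_mul (hx : ∀ᵐ x ∂μ, 0 ≤ x) {η b : ℝ} (hη : 0 < η)
    (hfin : Integrable (fun x => exp (η * x) - 1) μ) (hb : -η ≤ b) :
    Integrable (fun x => 1 - exp (-(b * x))) μ :=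
  (hfin.const_mul _).mono' (by fun_prop) (hx.mono fun _ hx =>
    (Real.norm_eq_abs _).trans_le (abs_one_sub_exp_neg_mul_le hη hb hx))

theorem analyticOnNhd_laplaceExponent (hx : ∀ᵐ x ∂μ, 0 ≤ x) {η : ℝ} (hη : 0 < η)
    (hfin : Integrable (fun x => exp (η * x) - 1) μ) :
    AnalyticOnNhd ℝ (laplaceExponent μ) (Ioi (-(η / 2))) := by
  intro b hb
  rw [mem_Ioi] at hb
  have hdom : Integrable (fun x => (exp (η / 2 * x) - 1) * exp (-(b * x))) μ := by
    refine hfin.mono' (by fun_prop) (hx.mono fun x hx => ?_)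
    have h1 : 1 ≤ exp (η / 2 * x) := one_le_exp (by positivity)
    have h2 : exp (-(b * x)) ≤ exp (η / 2 * x) := exp_le_exp.2 (by nlinarith)
    have h3 : exp (η / 2 * x) * exp (η / 2 * x) = exp (η * x) := by
      rw [← exp_add]
      ring_nf
    rw [Real.norm_of_nonneg (by positivity)]
    nlinarith [mul_le_mul_of_nonneg_left h2 (sub_nonneg.2 h1)]
  exact (hasFPowerSeriesOnBall_laplaceExponent hx (half_pos hη) hdom
    (integrable_one_sub_exp_neg_mul hx hη hfin (by linarith))).analyticAt

lemma integrable_exp_sub_one_mul_exp_neg_of_summable (hx : ∀ᵐ x ∂μ, 0 ≤ x) (hρ : 0 ≤ ρ)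
    (hmom : ∀ n : ℕ, Integrable (fun x => x ^ (n + 1) * exp (-(a * x))) μ)
    (hs : Summable fun n => ‖laplaceCoeff μ a n‖ * ρ ^ n) :
    Integrable (fun x => (exp (ρ * x) - 1) * exp (-(a * x))) μ := by
  have hterm : ∀ n : ℕ, ∫⁻ x, ENNReal.ofReal (ρ ^ (n + 1) / (n + 1)! *
      (x ^ (n + 1) * exp (-(a * x)))) ∂μ
        = ENNReal.ofReal (‖laplaceCoeff μ a (n + 1)‖ * ρ ^ (n + 1)) := fun n => by
    have hM : 0 ≤ ∫ x, x ^ (n + 1) * exp (-(a * x)) ∂μ :=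
      integral_nonneg_of_ae (hx.mono fun x hx => by positivity)
    rw [← ofReal_integral_eq_lintegral_ofReal ((hmom n).const_mul _)
      (hx.mono fun x hx => by positivity), integral_const_mul, laplaceCoeff, norm_mul,
      norm_div, norm_pow, norm_neg, norm_one, one_pow, Real.norm_natCast,
      Real.norm_of_nonneg hM]
    congr 1
    ring
  rw [← lintegral_ofReal_ne_top_iff_integrable (by fun_prop)
      (hx.mono fun x hx => mul_nonneg (sub_nonneg.2 (one_le_exp (by positivity))) (exp_pos _).le),
    lintegral_congr_ae (hx.mono fun x hx => by
      rw [← (hasSum_exp_sub_one_mul_exp_neg ρ a x).tsum_eq, ENNReal.ofReal_tsum_of_nonneg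
        (fun n => by positivity) (hasSum_exp_sub_one_mul_exp_neg ρ a x).summable]),
    lintegral_tsum fun n => by fun_prop, tsum_congr hterm,
    ← ENNReal.ofReal_tsum_of_nonneg (fun n => by positivity) ((summable_nat_add_iff 1).2 hs)]
  exact ENNReal.ofReal_ne_top

lemma integrable_one_sub_exp_neg_mul_of_nonneg [IsFiniteMeasure μ] (hx : ∀ᵐ x ∂μ, 0 ≤ x)
    (ha : 0 ≤ a) : Integrable (fun x => 1 - exp (-(a * x))) μ :=
  (integrable_const 1).mono' (by fun_prop) (hx.mono fun x hx => by
    rw [Real.norm_of_nonneg (sub_nonneg.2 (exp_le_one_iff.2 (by nlinarith)))]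
    linarith [exp_pos (-(a * x))])

lemma integrable_exp_sub_one_mul_exp_neg_self [IsFiniteMeasure μ] (hx : ∀ᵐ x ∂μ, 0 ≤ x)
    (ha : 0 ≤ a) : Integrable (fun x => (exp (a * x) - 1) * exp (-(a * x))) μ :=
  (integrable_one_sub_exp_neg_mul_of_nonneg hx ha).congr (ae_of_all _ fun x => by
    dsimp only
    rw [sub_mul, ← exp_add, add_neg_cancel, exp_zero, one_mul])

theorem exists_summable_laplaceCoeff_of_analyticAt [IsFiniteMeasure μ]
    (hx : ∀ᵐ x ∂μ, 0 ≤ x) {F : ℝ → ℝ} (hF : AnalyticAt ℝ F 0)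
    (hFL : ∀ q, 0 ≤ q → F q = laplaceExponent μ q) :
    ∃ a > 0, Summable fun n => ‖laplaceCoeff μ a n‖ * (2 * a) ^ n := by
  obtain ⟨p, r, hp⟩ := hF
  obtain ⟨δ, -, hδ0, hδr⟩ := ENNReal.lt_iff_exists_real_btwn.mp hp.r_pos
  set a : ℝ := δ / 4 with ha_def
  have ha : 0 < a := by
    have : (0 : ℝ) < δ := ENNReal.ofReal_pos.mp hδ0
    positivity
  have hδ : ENNReal.ofReal (4 * a) < r := by rwa [ha_def, mul_div_cancel₀ _ four_ne_zero]
  have hco := hp.changeOrigin (y := a) (by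
    rw [← enorm_eq_nnnorm, Real.enorm_eq_ofReal ha.le]
    exact ((ENNReal.ofReal_lt_ofReal_iff (by positivity)).2 (by linarith)).trans hδ)
  rw [← enorm_eq_nnnorm, Real.enorm_eq_ofReal ha.le, zero_add] at hco
  have hpL : p.changeOrigin a = .ofScalars ℝ (laplaceCoeff μ a) :=
    hco.hasFPowerSeriesAt.eq_formalMultilinearSeries
      ((hasFPowerSeriesOnBall_laplaceExponent hx ha
        (integrable_exp_sub_one_mul_exp_neg_self hx ha.le)
        (integrable_one_sub_exp_neg_mul_of_nonneg hx ha.le)).hasFPowerSeriesAt.congr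
        (by filter_upwards [eventually_gt_nhds ha] with q hq using (hFL q hq.le).symm))
  have hrad : ENNReal.ofReal (2 * a) < (p.changeOrigin a).radius := by
    refine lt_of_lt_of_le ?_ hco.r_le
    refine (ENNReal.cancel_of_ne ENNReal.ofReal_ne_top).lt_tsub_of_add_lt_right ?_
    rw [← ENNReal.ofReal_add (by positivity) ha.le]
    exact ((ENNReal.ofReal_lt_ofReal_iff (by positivity)).2 (by linarith)).trans hδ
  have h := (p.changeOrigin a).summable_norm_mul_pow hrad
  rw [hpL] at h
  exact ⟨a, ha, by simpa only [FormalMultilinearSeries.ofScalars_norm,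
    Real.coe_toNNReal _ (by positivity : 0 ≤ 2 * a)] using h⟩

theorem exists_integrable_exp_of_analyticAt [IsFiniteMeasure μ] (hx : ∀ᵐ x ∂μ, 0 ≤ x)
    {F : ℝ → ℝ} (hF : AnalyticAt ℝ F 0) (hFL : ∀ q, 0 ≤ q → F q = laplaceExponent μ q) :
    ∃ ε > 0, Integrable (fun x => exp (ε * x)) μ := by
  obtain ⟨a, ha, hs⟩ := exists_summable_laplaceCoeff_of_analyticAt hx hF hFL
  have hexp := integrable_exp_sub_one_mul_exp_neg_of_summable hx (by positivity)
    (integrable_pow_succ_mul_exp_neg hx ha (integrable_exp_sub_one_mul_exp_neg_self hx ha.le)) hs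
  refine ⟨a, ha, (hexp.add ((integrable_const 1).sub
    (integrable_one_sub_exp_neg_mul_of_nonneg hx ha.le))).congr (ae_of_all _ fun x => ?_)⟩
  have h : exp (2 * a * x) * exp (-(a * x)) = exp (a * x) := by
    rw [← exp_add]
    ring_nf
  simp only [Pi.add_apply, Pi.sub_apply]
  linear_combination h

lemma laplaceExponent_withDensity (hx : ∀ᵐ x ∂μ, 0 ≤ x)
    (hint : ∀ q, 0 ≤ q → Integrable (fun x => 1 - exp (-(q * x))) μ) {h q : ℝ} (hh : 0 ≤ h)
    (hq : 0 ≤ q) :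
    laplaceExponent (μ.withDensity fun x => ENNReal.ofReal (1 - exp (-(h * x)))) q
      = laplaceExponent μ q - laplaceExponent μ (q + h) + laplaceExponent μ h := by
  have hsub : Integrable (fun x => 1 - exp (-(q * x)) - (1 - exp (-((q + h) * x)))) μ :=
    (hint q hq).sub (hint (q + h) (by positivity))
  rw [laplaceExponent, integral_withDensity_eq_integral_toReal_smul (by fun_prop)
      (ae_of_all _ fun _ => ENNReal.ofReal_lt_top), laplaceExponent, laplaceExponent,
    laplaceExponent, ← integral_sub (hint q hq) (hint (q + h) (by positivity)),
    ← integral_add hsub (hint h hh)]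
  refine integral_congr_ae (hx.mono fun x hx => ?_)
  have hexp : exp (-((q + h) * x)) = exp (-(q * x)) * exp (-(h * x)) := by
    rw [← exp_add]
    ring_nf
  dsimp only
  rw [ENNReal.toReal_ofReal (sub_nonneg.2 (exp_le_one_iff.2 (by nlinarith))), smul_eq_mul, hexp]
  ring

theorem eventually_integrable_exp_sub_one_of_analyticAt (hx : ∀ᵐ x ∂μ, 0 ≤ x)
    (hint : ∀ q, 0 ≤ q → Integrable (fun x => 1 - exp (-(q * x))) μ)
    {F : ℝ → ℝ} (hF : AnalyticAt ℝ F 0) (hFL : ∀ q, 0 ≤ q → F q = laplaceExponent μ q) :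
    ∀ᶠ η in 𝓝[>] 0, Integrable (fun x => exp (η * x) - 1) μ := by
  obtain ⟨h, hFh, hh : 0 < h⟩ :=
    ((hF.eventually_analyticAt.filter_mono (nhdsWithin_le_nhds (s := Ioi 0))).and
      self_mem_nhdsWithin).exists
  set μh := μ.withDensity fun x => ENNReal.ofReal (1 - exp (-(h * x)))
  have : IsFiniteMeasure μh := ⟨by
    rw [withDensity_apply _ MeasurableSet.univ, Measure.restrict_univ]
    exact (hint h hh.le).lintegral_lt_top⟩
  have hK : AnalyticAt ℝ (fun q => F q - F (q + h) + F h) 0 :=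
    (hF.sub (hFh.comp_of_eq (analyticAt_id.add analyticAt_const) (zero_add h))).add
      analyticAt_const
  obtain ⟨ε, hε, hexp⟩ := exists_integrable_exp_of_analyticAt
    ((withDensity_absolutelyContinuous μ _).ae_le hx) hK fun q hq => by
      rw [laplaceExponent_withDensity hx hint hh.le hq, hFL q hq, hFL _ (by positivity),
        hFL h hh.le]
  filter_upwards [Ioc_mem_nhdsGT (lt_min hε hh)] with η ⟨hη, hηε⟩
  rw [le_min_iff] at hηε
  rw [← lintegral_ofReal_ne_top_iff_integrable (by fun_prop)
    (hx.mono fun x hx => sub_nonneg.2 (one_le_exp (by positivity)))]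
  refine ne_top_of_le_ne_top hexp.lintegral_lt_top.ne ?_
  rw [lintegral_withDensity_eq_lintegral_mul _ (by fun_prop) (by fun_prop)]
  refine lintegral_mono_ae (hx.mono fun x hx => ?_)
  have h0 : 0 ≤ 1 - exp (-(h * x)) := sub_nonneg.2 (exp_le_one_iff.2 (by nlinarith))
  rw [Pi.mul_apply, ← ENNReal.ofReal_mul h0]
  refine ENNReal.ofReal_le_ofReal ?_
  have h1 : exp (η * x) ≤ exp (ε * x) := exp_le_exp.2 (by nlinarith)
  have h2 : exp (-(h * x)) * exp (η * x) ≤ 1 := by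
    rw [← exp_add]
    exact exp_le_one_iff.2 (by nlinarith)
  nlinarith [mul_le_mul_of_nonneg_left h1 h0]

end Laplace

lemma ae_restrict_Ioi_nonneg (μ : Measure ℝ) : ∀ᵐ x ∂μ.restrict (Ioi 0), 0 ≤ x :=
  (ae_restrict_mem measurableSet_Ioi).mono fun _ hx => le_of_lt hx

structure IsMassPartition (s : ℕ → ℝ) : Prop where
  nonneg : ∀ i, 0 ≤ s i
  tsum_eq_one : ∑' i, s i = 1

namespace IsMassPartition

variable {s : ℕ → ℝ} {p : ℝ}

lemma summable (hs : IsMassPartition s) : Summable s := by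
  by_contra h
  simpa [tsum_eq_zero_of_not_summable h] using hs.tsum_eq_one

lemma le_one (hs : IsMassPartition s) (i : ℕ) : s i ≤ 1 :=
  hs.tsum_eq_one ▸ hs.summable.le_tsum i fun j _ => hs.nonneg j

lemma mem_Icc (hs : IsMassPartition s) (i : ℕ) : s i ∈ Icc (0 : ℝ) 1 :=
  ⟨hs.nonneg i, hs.le_one i⟩

lemma tsum_succ (hs : IsMassPartition s) : ∑' i, s (i + 1) = 1 - s 0 := by
  linarith [hs.summable.tsum_eq_zero_add, hs.tsum_eq_one]

lemma rpow_le (hs : IsMassPartition s) (hp : 1 ≤ p) (i : ℕ) : s i ^ p ≤ s i :=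
  rpow_le_self_of_le_one (hs.nonneg i) (hs.le_one i) hp

lemma summable_rpow (hs : IsMassPartition s) (hp : 1 ≤ p) : Summable fun i => s i ^ p :=
  hs.summable.of_nonneg_of_le (fun i => rpow_nonneg (hs.nonneg i) p) (hs.rpow_le hp)

lemma tsum_ofReal_sub_rpow (hs : IsMassPartition s) (hp : 1 ≤ p) :
    ∑' i, ENNReal.ofReal (s i - s i ^ p) = ENNReal.ofReal (1 - ∑' i, s i ^ p) := by
  rw [← ENNReal.ofReal_tsum_of_nonneg (fun i => sub_nonneg.2 (hs.rpow_le hp i))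
    (hs.summable.sub (hs.summable_rpow hp)), hs.summable.tsum_sub (hs.summable_rpow hp),
    hs.tsum_eq_one]

lemma one_sub_tsum_rpow_nonneg (hs : IsMassPartition s) (hp : 1 ≤ p) :
    0 ≤ 1 - ∑' i, s i ^ p :=
  sub_nonneg.2 (hs.tsum_eq_one ▸ (hs.summable_rpow hp).tsum_le_tsum (hs.rpow_le hp) hs.summable)

lemma one_sub_tsum_rpow_le (hs : IsMassPartition s) (hp : 1 ≤ p) :
    1 - ∑' i, s i ^ p ≤ p * (1 - s 0) := by
  have h0 : s 0 ^ p ≤ ∑' i, s i ^ p :=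
    (hs.summable_rpow hp).le_tsum 0 fun j _ => rpow_nonneg (hs.nonneg j) p
  have hb := one_add_mul_self_le_rpow_one_add (by linarith [hs.nonneg 0] : -1 ≤ s 0 - 1) hp
  rw [add_sub_cancel] at hb
  linarith

lemma tsum_ofReal_rpow_sub_le (hs : IsMassPartition s) (hp : 0 ≤ p) :
    ∑' i, ENNReal.ofReal (s i ^ p - s i)
      ≤ ENNReal.ofReal (1 - s 0) + ∑' i, ENNReal.ofReal (s (i + 1) ^ p) := by
  rw [tsum_eq_zero_add' ENNReal.summable]
  gcongr with i
  · linarith [rpow_le_one (hs.nonneg 0) (hs.le_one 0) hp]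
  · linarith [hs.nonneg (i + 1)]

lemma tsum_ofReal_rpow_succ_le (hs : IsMassPartition s) (hp : p ≤ 1) :
    ∑' i, ENNReal.ofReal (s (i + 1) ^ p)
      ≤ ENNReal.ofReal (1 - s 0) + ∑' i, ENNReal.ofReal (s i ^ p - s i) := by
  have hle i : s i ≤ s i ^ p := self_le_rpow_of_le_one (hs.nonneg i) (hs.le_one i) hp
  calc ∑' i, ENNReal.ofReal (s (i + 1) ^ p)
      = ∑' i, (ENNReal.ofReal (s (i + 1) ^ p - s (i + 1)) + ENNReal.ofReal (s (i + 1))) :=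
        tsum_congr fun i => by
          rw [← ENNReal.ofReal_add (sub_nonneg.2 (hle _)) (hs.nonneg _), sub_add_cancel]
    _ = ENNReal.ofReal (1 - s 0) + ∑' i, ENNReal.ofReal (s (i + 1) ^ p - s (i + 1)) := by
        rw [ENNReal.tsum_add, ← ENNReal.ofReal_tsum_of_nonneg (fun i => hs.nonneg _)
          ((summable_nat_add_iff 1).2 hs.summable), hs.tsum_succ, add_comm]
    _ ≤ ENNReal.ofReal (1 - s 0) + ∑' i, ENNReal.ofReal (s i ^ p - s i) := by
        rw [tsum_eq_zero_add' (f := fun i => ENNReal.ofReal (s i ^ p - s i)) ENNReal.summable]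
        gcongr
        exact le_add_self

end IsMassPartition

lemma ofReal_mul_indicator_neg_log {t : ℝ} (ht : t ∈ Icc (0 : ℝ) 1) {g : ℝ → ℝ} (hg : g 0 = 0) :
    ENNReal.ofReal t * (Ioi 0).indicator (fun x => ENNReal.ofReal (g x)) (-log t)
      = ENNReal.ofReal (t * g (-log t)) := by
  rcases ht.1.eq_or_lt with rfl | ht0
  · simp
  rcases ht.2.eq_or_lt with rfl | ht1
  · simp [hg]
  rw [indicator_of_mem (mem_Ioi.2 (neg_pos.2 (log_neg ht0 ht1))), ENNReal.ofReal_mul ht0.le]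

lemma mul_exp_mul_neg_log_sub_one {t : ℝ} (ht : 0 ≤ t) {η : ℝ} (hη : η ≠ 1) :
    t * (exp (η * -log t) - 1) = t ^ (1 - η) - t := by
  rcases ht.eq_or_lt with rfl | ht
  · simp [zero_rpow (sub_ne_zero.2 hη.symm)]
  have h : exp (η * -log t) = t ^ (-η) := by
    rw [rpow_def_of_pos ht]
    ring_nf
  rw [h, mul_sub, mul_one, sub_eq_add_neg 1 η, rpow_add ht, rpow_one]

lemma mul_one_sub_exp_neg_mul_neg_log {t : ℝ} (ht : 0 ≤ t) {q : ℝ} (hq : q ≠ -1) :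
    t * (1 - exp (-(q * -log t))) = t - t ^ (q + 1) := by
  rcases ht.eq_or_lt with rfl | ht
  · simp [zero_rpow (fun h => hq (eq_neg_of_add_eq_zero_left h))]
  have h : exp (-(q * -log t)) = t ^ q := by
    rw [rpow_def_of_pos ht]
    ring_nf
  rw [h, mul_sub, mul_one, rpow_add ht, rpow_one, mul_comm]

/-- `Ξ(dx) = ∑ᵢ e^{-x} ν(-log sᵢ ∈ dx)`: at `x = -log sᵢ` the weight `e^{-x}` is `sᵢ`. -/
noncomputable def taggedLevy (ν : Measure (ℕ → ℝ)) : Measure ℝ :=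
  Measure.sum fun i => Measure.map (fun s : ℕ → ℝ => -log (s i))
    (ν.withDensity fun s => ENNReal.ofReal (s i))

section TaggedFragment

variable {ν : Measure (ℕ → ℝ)}

lemma lintegral_Ioi_taggedLevy (hν : ∀ᵐ s ∂ν, ∀ i, s i ∈ Icc (0 : ℝ) 1) {g : ℝ → ℝ}
    (hgm : Measurable g) (hg : g 0 = 0) :
    ∫⁻ x in Ioi 0, ENNReal.ofReal (g x) ∂taggedLevy ν
      = ∫⁻ s, ∑' i, ENNReal.ofReal (s i * g (-log (s i))) ∂ν := by
  have hind : Measurable ((Ioi (0 : ℝ)).indicator fun x => ENNReal.ofReal (g x)) :=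
    hgm.ennreal_ofReal.indicator measurableSet_Ioi
  have hlog (i : ℕ) : Measurable fun s : ℕ → ℝ => -log (s i) := (measurable_pi_apply i).log.neg
  have hcomp (i : ℕ) : Measurable fun s : ℕ → ℝ =>
      (Ioi (0 : ℝ)).indicator (fun x => ENNReal.ofReal (g x)) (-log (s i)) :=
    hind.comp (hlog i)
  rw [← lintegral_indicator measurableSet_Ioi, taggedLevy, lintegral_sum_measure]
  have hi (i : ℕ) : ∫⁻ x, (Ioi 0).indicator (fun x => ENNReal.ofReal (g x)) x
      ∂Measure.map (fun s : ℕ → ℝ => -log (s i)) (ν.withDensity fun s => ENNReal.ofReal (s i))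
        = ∫⁻ s, ENNReal.ofReal (s i) * (Ioi 0).indicator (fun x => ENNReal.ofReal (g x))
          (-log (s i)) ∂ν := by
    rw [lintegral_map hind (hlog i),
      lintegral_withDensity_eq_lintegral_mul _ (by fun_prop) (hcomp i)]
    rfl
  rw [tsum_congr hi, ← lintegral_tsum (f := fun i (s : ℕ → ℝ) => ENNReal.ofReal (s i) *
      (Ioi 0).indicator (fun x => ENNReal.ofReal (g x)) (-log (s i))) fun i =>
    ((measurable_pi_apply i).ennreal_ofReal.mul (hcomp i)).aemeasurable]
  exact lintegral_congr_ae (hν.mono fun s hs =>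
    tsum_congr fun i => ofReal_mul_indicator_neg_log (hs i) hg)

lemma lintegral_exp_sub_one_taggedLevy (hν : ∀ᵐ s ∂ν, ∀ i, s i ∈ Icc (0 : ℝ) 1) {η : ℝ}
    (hη : η ≠ 1) :
    ∫⁻ x in Ioi 0, ENNReal.ofReal (exp (η * x) - 1) ∂taggedLevy ν
      = ∫⁻ s, ∑' i, ENNReal.ofReal (s i ^ (1 - η) - s i) ∂ν := by
  rw [lintegral_Ioi_taggedLevy hν (by fun_prop) (by simp)]
  exact lintegral_congr_ae (hν.mono fun s hs => tsum_congr fun i => by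
    rw [mul_exp_mul_neg_log_sub_one (hs i).1 hη])

lemma lintegral_one_sub_exp_neg_taggedLevy (hν : ∀ᵐ s ∂ν, ∀ i, s i ∈ Icc (0 : ℝ) 1) {q : ℝ}
    (hq : q ≠ -1) :
    ∫⁻ x in Ioi 0, ENNReal.ofReal (1 - exp (-(q * x))) ∂taggedLevy ν
      = ∫⁻ s, ∑' i, ENNReal.ofReal (s i - s i ^ (q + 1)) ∂ν := by
  rw [lintegral_Ioi_taggedLevy hν (by fun_prop) (by simp)]
  exact lintegral_congr_ae (hν.mono fun s hs => tsum_congr fun i => by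
    rw [mul_one_sub_exp_neg_mul_neg_log (hs i).1 hq])

lemma laplaceExponent_taggedLevy (hν : ∀ᵐ s ∂ν, IsMassPartition s) {q : ℝ} (hq : 0 ≤ q) :
    laplaceExponent ((taggedLevy ν).restrict (Ioi 0)) q = ∫ s, (1 - ∑' i, s i ^ (q + 1)) ∂ν := by
  have hp : 1 ≤ q + 1 := by linarith
  rw [laplaceExponent, integral_eq_lintegral_of_nonneg_ae ((ae_restrict_Ioi_nonneg _).mono
      fun x hx => sub_nonneg.2 (exp_le_one_iff.2 (by nlinarith))) (by fun_prop),
    lintegral_one_sub_exp_neg_taggedLevy (hν.mono fun s hs => hs.mem_Icc) (by linarith),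
    ← integral_toReal (by fun_prop) (hν.mono fun s hs => by
      rw [hs.tsum_ofReal_sub_rpow hp]
      exact ENNReal.ofReal_lt_top)]
  exact integral_congr_ae (hν.mono fun s hs => by
    dsimp only
    rw [hs.tsum_ofReal_sub_rpow hp, ENNReal.toReal_ofReal (hs.one_sub_tsum_rpow_nonneg hp)])

lemma integrable_one_sub_exp_neg_taggedLevy (hν : ∀ᵐ s ∂ν, IsMassPartition s)
    (h_int : ∫⁻ s, ENNReal.ofReal (1 - s 0) ∂ν < ⊤) {q : ℝ} (hq : 0 ≤ q) :
    Integrable (fun x => 1 - exp (-(q * x))) ((taggedLevy ν).restrict (Ioi 0)) := by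
  have hp : 1 ≤ q + 1 := by linarith
  rw [← lintegral_ofReal_ne_top_iff_integrable (by fun_prop) ((ae_restrict_Ioi_nonneg _).mono
      fun x hx => sub_nonneg.2 (exp_le_one_iff.2 (by nlinarith))),
    lintegral_one_sub_exp_neg_taggedLevy (hν.mono fun s hs => hs.mem_Icc) (by linarith)]
  refine ne_top_of_le_ne_top (ENNReal.mul_ne_top (ENNReal.ofReal_ne_top (r := q + 1)) h_int.ne) ?_
  rw [← lintegral_const_mul' _ _ ENNReal.ofReal_ne_top]
  refine lintegral_mono_ae (hν.mono fun s hs => ?_)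
  rw [hs.tsum_ofReal_sub_rpow hp, ← ENNReal.ofReal_mul (by linarith)]
  exact ENNReal.ofReal_le_ofReal (hs.one_sub_tsum_rpow_le hp)

lemma lintegral_tsum_rpow_sub_le (hν : ∀ᵐ s ∂ν, IsMassPartition s) {p : ℝ} (hp : 0 ≤ p) :
    ∫⁻ s, ∑' i, ENNReal.ofReal (s i ^ p - s i) ∂ν
      ≤ ∫⁻ s, ENNReal.ofReal (1 - s 0) ∂ν + ∫⁻ s, ∑' i, ENNReal.ofReal (s (i + 1) ^ p) ∂ν := by
  rw [← lintegral_add_left (by fun_prop)]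
  exact lintegral_mono_ae (hν.mono fun s hs => hs.tsum_ofReal_rpow_sub_le hp)

lemma lintegral_tsum_rpow_succ_le (hν : ∀ᵐ s ∂ν, IsMassPartition s) {p : ℝ} (hp : p ≤ 1) :
    ∫⁻ s, ∑' i, ENNReal.ofReal (s (i + 1) ^ p) ∂ν
      ≤ ∫⁻ s, ENNReal.ofReal (1 - s 0) ∂ν + ∫⁻ s, ∑' i, ENNReal.ofReal (s i ^ p - s i) ∂ν := by
  rw [← lintegral_add_left (by fun_prop)]
  exact lintegral_mono_ae (hν.mono fun s hs => hs.tsum_ofReal_rpow_succ_le hp)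

end TaggedFragment

theorem stmt_4_general (ν : Measure (ℕ → ℝ))
    (h_nonneg : ∀ᵐ s ∂ν, ∀ i, 0 ≤ s i)
    (h_mass : ∀ᵐ s ∂ν, ∑' i, s i = 1)
    (h_int : ∫⁻ s, ENNReal.ofReal (1 - s 0) ∂ν < ⊤) :
    let Ξ : Measure ℝ := Measure.sum (fun i : ℕ =>
      Measure.map (fun s : ℕ → ℝ => -Real.log (s i))
        (ν.withDensity (fun s => ENNReal.ofReal (s i))))
    let φ : ℝ → ℝ := fun q => ∫ s, (1 - ∑' i, (s i) ^ (q + 1)) ∂ν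
    (∀ η : ℝ, η ∈ Set.Ioo (0 : ℝ) 1 →
        (∫⁻ s, ∑' i : ℕ, ENNReal.ofReal ((s (i + 1)) ^ (1 - η)) ∂ν) < ⊤ →
        (∫⁻ x in Set.Ioi (0 : ℝ), ENNReal.ofReal (Real.exp (η * x) - 1) ∂Ξ) < ⊤ ∧
        ∃ η' > (0 : ℝ), ∃ F : ℝ → ℝ,
          AnalyticOnNhd ℝ F (Set.Ioi (-η')) ∧ ∀ q ≥ (0 : ℝ), F q = φ q) ∧
    ((∃ η' > (0 : ℝ), ∃ F : ℝ → ℝ,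
        AnalyticOnNhd ℝ F (Set.Ioi (-η')) ∧ ∀ q ≥ (0 : ℝ), F q = φ q) →
      ∃ η ∈ Set.Ioo (0 : ℝ) 1,
        (∫⁻ s, ∑' i : ℕ, ENNReal.ofReal ((s (i + 1)) ^ (1 - η)) ∂ν) < ⊤) := by
  intro Ξ φ
  have hν : ∀ᵐ s ∂ν, IsMassPartition s := by
    filter_upwards [h_nonneg, h_mass] with s h0 h1 using ⟨h0, h1⟩
  have hIcc : ∀ᵐ s ∂ν, ∀ i, s i ∈ Icc (0 : ℝ) 1 := hν.mono fun s hs => hs.mem_Icc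
  have hx := ae_restrict_Ioi_nonneg (taggedLevy ν)
  have hφ (q : ℝ) (hq : 0 ≤ q) : laplaceExponent ((taggedLevy ν).restrict (Ioi 0)) q = φ q :=
    laplaceExponent_taggedLevy hν hq
  refine ⟨fun η ⟨hη0, hη1⟩ hfin => ?_, fun ⟨η', hη', F, hF, hFφ⟩ => ?_⟩
  · have hΞ : ∫⁻ x in Ioi 0, ENNReal.ofReal (exp (η * x) - 1) ∂taggedLevy ν < ⊤ := by
      rw [lintegral_exp_sub_one_taggedLevy hIcc hη1.ne]
      exact (lintegral_tsum_rpow_sub_le hν (by linarith)).trans_lt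
        (ENNReal.add_lt_top.2 ⟨h_int, hfin⟩)
    have hint := (lintegral_ofReal_ne_top_iff_integrable (by fun_prop)
      (hx.mono fun x hx => sub_nonneg.2 (one_le_exp (by positivity)))).1 hΞ.ne
    exact ⟨hΞ, η / 2, by positivity, _, analyticOnNhd_laplaceExponent hx hη0 hint, hφ⟩
  · obtain ⟨η, hint, hη⟩ := ((eventually_integrable_exp_sub_one_of_analyticAt hx
      (fun q hq => integrable_one_sub_exp_neg_taggedLevy hν h_int hq) (hF 0 (neg_lt_zero.2 hη'))
      fun q hq => (hFφ q hq).trans (hφ q hq).symm).and (Ioo_mem_nhdsGT one_pos)).exists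
    have hΞ := hint.lintegral_lt_top
    rw [lintegral_exp_sub_one_taggedLevy hIcc hη.2.ne] at hΞ
    exact ⟨η, hη, (lintegral_tsum_rpow_succ_le hν (by linarith [hη.1])).trans_lt
      (ENNReal.add_lt_top.2 ⟨h_int, hΞ⟩)⟩

/-- Assumption (Exp): if `∫ ∑_{i ≥ 2} s_i^{1-η} dν < ∞` for some `η ∈ (0,1)`, then
`∫ (e^{ηx} - 1) Ξ(dx) < ∞`, where `Ξ(dx) = ∑_i e^{-x} ν(-log s_i ∈ dx)` is the Lévy
measure of the tagged-fragment subordinator; consequently the Laplace exponent `φ`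
admits an analytic continuation on `(-η', ∞)` for some `η' > 0`, and conversely. -/
theorem stmt_4 (ν : Measure (ℕ → ℝ))
    (h_mono : ∀ᵐ s ∂ν, Antitone s)
    (h_nonneg : ∀ᵐ s ∂ν, ∀ i, 0 ≤ s i)
    (h_mass : ∀ᵐ s ∂ν, ∑' i, s i = 1)
    (h_int : ∫⁻ s, ENNReal.ofReal (1 - s 0) ∂ν < ⊤) :
    let Ξ : Measure ℝ := Measure.sum (fun i : ℕ =>
      Measure.map (fun s : ℕ → ℝ => -Real.log (s i))
        (ν.withDensity (fun s => ENNReal.ofReal (s i))))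
    let φ : ℝ → ℝ := fun q => ∫ s, (1 - ∑' i, (s i) ^ (q + 1)) ∂ν
    (∀ η : ℝ, η ∈ Set.Ioo (0 : ℝ) 1 →
        (∫⁻ s, ∑' i : ℕ, ENNReal.ofReal ((s (i + 1)) ^ (1 - η)) ∂ν) < ⊤ →
        (∫⁻ x in Set.Ioi (0 : ℝ), ENNReal.ofReal (Real.exp (η * x) - 1) ∂Ξ) < ⊤ ∧
        ∃ η' > (0 : ℝ), ∃ F : ℝ → ℝ,
          AnalyticOnNhd ℝ F (Set.Ioi (-η')) ∧ ∀ q ≥ (0 : ℝ), F q = φ q) ∧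
    ((∃ η' > (0 : ℝ), ∃ F : ℝ → ℝ,
        AnalyticOnNhd ℝ F (Set.Ioi (-η')) ∧ ∀ q ≥ (0 : ℝ), F q = φ q) →
      ∃ η ∈ Set.Ioo (0 : ℝ) 1,
        (∫⁻ s, ∑' i : ℕ, ENNReal.ofReal ((s (i + 1)) ^ (1 - η)) ∂ν) < ⊤) :=
  stmt_4_general ν h_nonneg h_mass h_int
end

section
/- For $a \in (0,1)$, define $g_a(x) = \frac{1}{\Gamma(a)} x^{3-2a}(1-x)^{a-1}\sum_{n=0}^{\infty} \frac{(2)_n (1-a)_n}{(a)_n}\cdot \frac{(1-x)^n}{n!}$ for $x \in (0,1)$, where $(u)_n = u(u+1)\cdots(u+n-1)$ is the Pochhammer symbol. Then for every $q > 0$, the Mellin transform satisfies $\int_0^1 x^{q-1} g_a(x)\,\mathrm dx = \frac{\Gamma(q)\,\Gamma(q+3-2a)}{\Gamma(q+1-a)\,\Gamma(q+2)}$. -/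
/-!
Expanding the series, the `n`-th term of the integrand is `cₙ x^(q+2-2a) (1-x)^(a+n-1)` with
`cₙ = (2)ₙ (1-a)ₙ / (Γ(a) (a)ₙ n!)`, whose integral is `cₙ B(q+3-2a, a+n)`. By
`Γ(u+n) = (u)ₙ Γ(u)` this equals `K (n+1) B(1-a+n, q+2)` with `K = Γ(q+3-2a) / (Γ(1-a) Γ(q+2))`.
Writing these Beta values as integrals again and summing `∑ (n+1) tⁿ = (1-t)⁻²` under the
integral gives `∑ (n+1) B(u+n, v+2) = B(u, v)` (the case of Gauss's summation theorem needed
here), so the transform is `K B(1-a, q)`. All terms are nonnegative, so monotone convergence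
justifies both interchanges.
-/

open MeasureTheory Set ProbabilityTheory

theorem MeasureTheory.hasSum_integral_of_nonneg {α : Type*} [MeasurableSpace α]
    {μ : Measure α} {f : ℕ → α → ℝ} {F : α → ℝ} (hf_nonneg : ∀ n, 0 ≤ᵐ[μ] f n)
    (hf : ∀ n, Integrable (f n) μ) (hF : Integrable F μ)
    (h_sum : ∀ᵐ x ∂μ, HasSum (fun n ↦ f n x) (F x)) :
    HasSum (fun n ↦ ∫ x, f n x ∂μ) (∫ x, F x ∂μ) := by
  rw [hasSum_iff_tendsto_nat_of_nonneg (fun n ↦ integral_nonneg_of_ae (hf_nonneg n))]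
  simp_rw [← integral_finsetSum _ fun i _ ↦ hf i]
  refine integral_tendsto_of_tendsto_of_monotone (fun n ↦ integrable_finsetSum _ fun i _ ↦ hf i)
    hF ?_ ?_
  · filter_upwards [ae_all_iff.2 hf_nonneg] with x hx
    exact fun m n hmn ↦ Finset.sum_le_sum_of_subset_of_nonneg (Finset.range_mono hmn)
      fun i _ _ ↦ hx i
  · filter_upwards [h_sum] with x hx using hx.tendsto_sum_nat

theorem MeasureTheory.hasSum_integral_tsum_of_nonneg {α : Type*} [MeasurableSpace α]
    {μ : Measure α} {f : ℕ → α → ℝ} (hf_nonneg : ∀ n, 0 ≤ᵐ[μ] f n)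
    (hf : ∀ n, Integrable (f n) μ) (h_sum : Summable fun n ↦ ∫ x, f n x ∂μ) :
    HasSum (fun n ↦ ∫ x, f n x ∂μ) (∫ x, ∑' n, f n x ∂μ) := by
  refine hasSum_integral_of_summable_integral_norm hf (h_sum.congr fun n ↦ integral_congr_ae ?_)
  filter_upwards [hf_nonneg n] with x hx using (Real.norm_of_nonneg hx).symm

lemma hasSum_succ_mul_pow {t : ℝ} (ht : |t| < 1) :
    HasSum (fun n : ℕ ↦ ((n : ℝ) + 1) * t ^ n) (1 / (1 - t) ^ 2) := by
  simpa using hasSum_choose_mul_geometric_of_norm_lt_one 1 (r := t) ht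

section Beta

variable {u v : ℝ}

lemma rpow_mul_one_sub_rpow_nonneg {x : ℝ} (hx : x ∈ Ioo (0 : ℝ) 1) (r s : ℝ) :
    0 ≤ x ^ r * (1 - x) ^ s :=
  mul_nonneg (Real.rpow_nonneg hx.1.le r) (Real.rpow_nonneg (sub_nonneg.2 hx.2.le) s)

lemma lintegral_rpow_mul_one_sub_rpow (hu : 0 < u) (hv : 0 < v) :
    ∫⁻ x in Ioo (0 : ℝ) 1, ENNReal.ofReal (x ^ (u - 1) * (1 - x) ^ (v - 1))
      = ENNReal.ofReal (beta u v) := by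
  have h := lintegral_betaPDF_eq_one hu hv
  rw [lintegral_betaPDF] at h
  simp_rw [mul_assoc, ENNReal.ofReal_mul (one_div_pos.2 (beta_pos hu hv)).le] at h
  rw [lintegral_const_mul' _ _ ENNReal.ofReal_ne_top, mul_comm] at h
  rw [ENNReal.eq_inv_of_mul_eq_one_left h,
    ← ENNReal.ofReal_inv_of_pos (one_div_pos.2 (beta_pos hu hv)), one_div, inv_inv]

lemma integrableOn_rpow_mul_one_sub_rpow (hu : 0 < u) (hv : 0 < v) :
    IntegrableOn (fun x : ℝ ↦ x ^ (u - 1) * (1 - x) ^ (v - 1)) (Ioo 0 1) := by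
  refine ⟨by fun_prop, (hasFiniteIntegral_iff_ofReal ?_).2 ?_⟩
  · exact ae_restrict_of_forall_mem measurableSet_Ioo fun x hx ↦
      rpow_mul_one_sub_rpow_nonneg hx _ _
  · rw [lintegral_rpow_mul_one_sub_rpow hu hv]
    exact ENNReal.ofReal_lt_top

lemma integral_rpow_mul_one_sub_rpow (hu : 0 < u) (hv : 0 < v) :
    ∫ x in Ioo (0 : ℝ) 1, x ^ (u - 1) * (1 - x) ^ (v - 1) = beta u v := by
  rw [integral_eq_lintegral_of_nonneg_ae, lintegral_rpow_mul_one_sub_rpow hu hv,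
    ENNReal.toReal_ofReal (beta_pos hu hv).le]
  · exact ae_restrict_of_forall_mem measurableSet_Ioo fun x hx ↦
      rpow_mul_one_sub_rpow_nonneg hx _ _
  · exact (integrableOn_rpow_mul_one_sub_rpow hu hv).1

lemma hasSum_succ_mul_rpow_mul_one_sub_rpow {x : ℝ} (hx : x ∈ Ioo (0 : ℝ) 1) :
    HasSum (fun n : ℕ ↦ ((n : ℝ) + 1) * (x ^ (u + n - 1) * (1 - x) ^ (v + 2 - 1)))
      (x ^ (u - 1) * (1 - x) ^ (v - 1)) := by
  have hx1 : 1 - x ≠ 0 := (sub_pos.2 hx.2).ne'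
  have hterm : ∀ n : ℕ, ((n : ℝ) + 1) * (x ^ (u + n - 1) * (1 - x) ^ (v + 2 - 1))
      = x ^ (u - 1) * (1 - x) ^ (v + 1) * (((n : ℝ) + 1) * x ^ n) := fun n ↦ by
    rw [show u + n - 1 = u - 1 + n by ring, Real.rpow_add_natCast hx.1.ne',
      show v + 2 - 1 = v + 1 by ring]
    ring
  have hlim : x ^ (u - 1) * (1 - x) ^ (v - 1)
      = x ^ (u - 1) * (1 - x) ^ (v + 1) * (1 / (1 - x) ^ 2) := by
    rw [show v + 1 = v - 1 + (2 : ℕ) by push_cast; ring, Real.rpow_add_natCast hx1]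
    field_simp
  rw [funext hterm, hlim]
  exact (hasSum_succ_mul_pow (abs_lt.2 ⟨by linarith [hx.1], hx.2⟩)).mul_left _

theorem hasSum_succ_mul_beta (hu : 0 < u) (hv : 0 < v) :
    HasSum (fun n : ℕ ↦ ((n : ℝ) + 1) * beta (u + n) (v + 2)) (beta u v) := by
  have hbeta : ∀ n : ℕ, ∫ x in Ioo (0 : ℝ) 1, x ^ (u + n - 1) * (1 - x) ^ (v + 2 - 1)
      = beta (u + n) (v + 2) := fun n ↦
    integral_rpow_mul_one_sub_rpow (by positivity) (by positivity)
  have hsum : ∀ᵐ x ∂volume.restrict (Ioo (0 : ℝ) 1),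
      HasSum (fun n : ℕ ↦ ((n : ℝ) + 1) * (x ^ (u + n - 1) * (1 - x) ^ (v + 2 - 1)))
        (x ^ (u - 1) * (1 - x) ^ (v - 1)) :=
    ae_restrict_of_forall_mem measurableSet_Ioo fun x hx ↦
      hasSum_succ_mul_rpow_mul_one_sub_rpow hx
  have h := hasSum_integral_of_nonneg
    (fun n ↦ ae_restrict_of_forall_mem measurableSet_Ioo fun x hx ↦
      mul_nonneg (Nat.cast_add_one_pos n).le (rpow_mul_one_sub_rpow_nonneg hx _ _))
    (fun n ↦ (integrableOn_rpow_mul_one_sub_rpow (by positivity) (by positivity)).const_mul _)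
    (integrableOn_rpow_mul_one_sub_rpow hu hv) hsum
  simpa only [integral_const_mul, hbeta, integral_rpow_mul_one_sub_rpow hu hv] using h

end Beta

lemma Real.prod_range_add_mul_Gamma {u : ℝ} (hu : 0 < u) (n : ℕ) :
    (∏ i ∈ Finset.range n, (u + i)) * Real.Gamma u = Real.Gamma (u + n) := by
  induction n with
  | zero => simp
  | succ n ih =>
    rw [Finset.prod_range_succ, mul_right_comm, ih, Nat.cast_succ, ← add_assoc,
      Real.Gamma_add_one (by positivity), mul_comm]

noncomputable def densityCoeff (a : ℝ) (n : ℕ) : ℝ :=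
  1 / Real.Gamma a * ((∏ i ∈ Finset.range n, ((2 : ℝ) + i))
    * (∏ i ∈ Finset.range n, (1 - a + i)) / (∏ i ∈ Finset.range n, (a + i)) / n.factorial)

lemma densityCoeff_nonneg {a : ℝ} (ha0 : 0 < a) (ha1 : a ≤ 1) (n : ℕ) :
    0 ≤ densityCoeff a n := by
  have := Real.Gamma_pos_of_pos ha0
  have : 0 ≤ ∏ i ∈ Finset.range n, (1 - a + i) :=
    Finset.prod_nonneg fun i _ ↦ by linarith [(Nat.cast_nonneg i : (0 : ℝ) ≤ i)]
  unfold densityCoeff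
  positivity

lemma densityCoeff_mul_beta {a q : ℝ} (ha0 : 0 < a) (ha1 : a < 1) (hq : 0 < q) (n : ℕ) :
    densityCoeff a n * beta (q + 3 - 2 * a) (a + n)
      = Real.Gamma (q + 3 - 2 * a) / (Real.Gamma (1 - a) * Real.Gamma (q + 2))
        * ((n + 1) * beta (1 - a + n) (q + 2)) := by
  unfold densityCoeff
  have h2 := Real.prod_range_add_mul_Gamma two_pos n
  have h1a := Real.prod_range_add_mul_Gamma (sub_pos.2 ha1) n
  have ha := Real.prod_range_add_mul_Gamma ha0 n
  rw [Real.Gamma_two, mul_one, show (2 : ℝ) + n = n + 1 + 1 by ring,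
    Real.Gamma_add_one (by positivity), Real.Gamma_nat_eq_factorial] at h2
  have hG1a := Real.Gamma_pos_of_pos (sub_pos.2 ha1)
  have hGa := Real.Gamma_pos_of_pos ha0
  rw [h2, eq_div_of_mul_eq hG1a.ne' h1a, eq_div_of_mul_eq hGa.ne' ha, beta, beta,
    show q + 3 - 2 * a + (a + n) = 1 - a + n + (q + 2) by ring]
  have := Real.Gamma_pos_of_pos (show 0 < q + 2 by linarith)
  have := Real.Gamma_pos_of_pos (show 0 < a + n by positivity)
  field_simp

lemma rpow_mul_series_eq_tsum {x : ℝ} (hx : x ∈ Ioo (0 : ℝ) 1) (C a b q : ℝ) (p : ℕ → ℝ) :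
    x ^ (q - 1) * (C * x ^ b * (1 - x) ^ (a - 1) * ∑' n : ℕ, p n * (1 - x) ^ n / n.factorial)
      = ∑' n : ℕ, C * (p n / n.factorial) * (x ^ (q + b - 1) * (1 - x) ^ (a + n - 1)) := by
  have hx1 : 1 - x ≠ 0 := (sub_pos.2 hx.2).ne'
  simp only [← tsum_mul_left]
  refine tsum_congr fun n ↦ ?_
  rw [show q + b - 1 = q - 1 + b by ring, Real.rpow_add hx.1,
    show a + n - 1 = a - 1 + n by ring, Real.rpow_add_natCast hx1]
  ring

lemma hasSum_integral_densityCoeff_mul {a q : ℝ} (ha0 : 0 < a) (ha1 : a < 1) (hq : 0 < q) :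
    HasSum (fun n : ℕ ↦ ∫ x in Ioo (0 : ℝ) 1,
        densityCoeff a n * (x ^ (q + 3 - 2 * a - 1) * (1 - x) ^ (a + n - 1)))
      (Real.Gamma (q + 3 - 2 * a) / (Real.Gamma (1 - a) * Real.Gamma (q + 2))
        * beta (1 - a) q) := by
  have hint : ∀ n : ℕ, ∫ x in Ioo (0 : ℝ) 1,
      densityCoeff a n * (x ^ (q + 3 - 2 * a - 1) * (1 - x) ^ (a + n - 1))
        = Real.Gamma (q + 3 - 2 * a) / (Real.Gamma (1 - a) * Real.Gamma (q + 2))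
          * ((n + 1) * beta (1 - a + n) (q + 2)) := fun n ↦ by
    rw [integral_const_mul, integral_rpow_mul_one_sub_rpow (by linarith) (by positivity),
      densityCoeff_mul_beta ha0 ha1 hq n]
  simpa only [hint] using (hasSum_succ_mul_beta (sub_pos.2 ha1) hq).mul_left _

/-- The density `g_a` of the potential measure of the Ford-model tagged-fragment
subordinator has Mellin transform
`∫₀¹ x^{q-1} g_a(x) dx = Γ(q)Γ(q+3-2a)/(Γ(q+1-a)Γ(q+2))` for all `q > 0`, where
`g_a(x) = Γ(a)⁻¹ x^{3-2a}(1-x)^{a-1} ∑ₙ ((2)ₙ(1-a)ₙ/(a)ₙ) (1-x)ⁿ/n!` with `(u)ₙ` the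
Pochhammer symbol. -/
theorem stmt_14 (a : ℝ) (ha : a ∈ Set.Ioo (0 : ℝ) 1) (q : ℝ) (hq : 0 < q) :
    ∫ x in Set.Ioo (0 : ℝ) 1, x ^ (q - 1) *
        ((1 / Real.Gamma a) * x ^ (3 - 2 * a) * (1 - x) ^ (a - 1) *
          ∑' n : ℕ,
            ((∏ i ∈ Finset.range n, ((2 : ℝ) + i)) *
              (∏ i ∈ Finset.range n, (1 - a + i)) /
              (∏ i ∈ Finset.range n, (a + i))) * (1 - x) ^ n / n.factorial)
      = Real.Gamma q * Real.Gamma (q + 3 - 2 * a)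
        / (Real.Gamma (q + 1 - a) * Real.Gamma (q + 2)) := by
  obtain ⟨ha0, ha1⟩ := ha
  have hterms := hasSum_integral_densityCoeff_mul ha0 ha1 hq
  have hseries := hasSum_integral_tsum_of_nonneg
    (fun n ↦ ae_restrict_of_forall_mem measurableSet_Ioo fun x hx ↦
      mul_nonneg (densityCoeff_nonneg ha0 ha1.le n) (rpow_mul_one_sub_rpow_nonneg hx _ _))
    (fun n ↦ (integrableOn_rpow_mul_one_sub_rpow (by linarith) (by positivity)).const_mul _)
    hterms.summable
  have := Real.Gamma_pos_of_pos (sub_pos.2 ha1)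
  have := Real.Gamma_pos_of_pos (show 0 < q + 2 by linarith)
  calc _ = ∫ x in Ioo (0 : ℝ) 1, ∑' n : ℕ,
        densityCoeff a n * (x ^ (q + 3 - 2 * a - 1) * (1 - x) ^ (a + n - 1)) :=
        setIntegral_congr_fun measurableSet_Ioo fun x hx ↦ by
          rw [rpow_mul_series_eq_tsum hx, ← add_sub_assoc]
          rfl
    _ = _ := hseries.unique hterms
    _ = _ := by
      rw [beta, show 1 - a + q = q + 1 - a by ring]
      field_simp
end
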